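/- Let σ > 0 and δ > 0, set r = δ/σ, and let p_z be the standardized two-component Gaussian mixture density p_z(v) = (N(v;−δ̂,σ̂) + N(v;δ̂,σ̂))/2 with δ̂ = δ/√(σ²+δ²), σ̂ = σ/√(σ²+δ²). Then the differential entropy of p_z satisfies the upper bound H(p_z) ≤ (1/2)(1 + ln(2π)) − (1/2) ln(1 + r²) + ln 2. -/

import Mathlib

/-!
A mixture `p = w g₁ + (1 - w) g₂` dominates each of its weighted components, so
`log p ≥ log w + log g₁` wherever `g₁ > 0`, and likewise for `g₂`. Integrating `log p` against
each component and recombining gives `H(p) ≤ w H(g₁) + (1 - w) H(g₂) + h(w)` with `h` the binary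
entropy. For `w = 1/2` and two Gaussians of standard deviation `σ̂ = (1 + r²)^(-1/2)` this is
`½(1 + ln 2π) + ln σ̂ + ln 2`. The Gaussian entropy itself comes from the second moment, which is
the variance of Mathlib's `gaussianReal`.
-/

open Real MeasureTheory

/-- The univariate Gaussian density `N(v; μ, σ) = (1/(σ√(2π))) exp(−(v−μ)²/(2σ²))`. -/
noncomputable def gauss (μ σ : ℝ) (v : ℝ) : ℝ :=
  (1 / (σ * Real.sqrt (2 * π))) * Real.exp (-((v - μ) ^ 2) / (2 * σ ^ 2))

/-- The differential entropy `H(p) = −∫ p(v) ln p(v) dv` of a density on ℝ. -/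
noncomputable def diffEntropy (p : ℝ → ℝ) : ℝ :=
  -∫ v : ℝ, p v * Real.log (p v)

open ProbabilityTheory

section Gauss

variable {s : ℝ}

lemma gauss_eq_gaussianPDFReal (hs : 0 < s) (μ : ℝ) :
    gauss μ s = gaussianPDFReal μ (s ^ 2).toNNReal := by
  ext v
  have hsqrt : √(2 * π * s ^ 2) = s * √(2 * π) := by
    rw [mul_comm, sqrt_mul (sq_nonneg s), sqrt_sq hs.le]
  rw [gauss, gaussianPDFReal_def, Real.coe_toNNReal _ (sq_nonneg s), hsqrt, one_div]

lemma gauss_pos (hs : 0 < s) (μ v : ℝ) : 0 < gauss μ s v := by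
  unfold gauss
  positivity

lemma measurable_gauss (μ s : ℝ) : Measurable (gauss μ s) := by
  unfold gauss
  fun_prop

lemma gauss_le (hs : 0 < s) (μ v : ℝ) : gauss μ s v ≤ (s * √(2 * π))⁻¹ := by
  rw [gauss, one_div]
  refine mul_le_of_le_one_right (by positivity) (exp_le_one_iff.2 ?_)
  exact div_nonpos_of_nonpos_of_nonneg (neg_nonpos.2 (sq_nonneg _)) (by positivity)

lemma log_gauss (hs : 0 < s) (μ v : ℝ) :
    log (gauss μ s v) = -log s - log (2 * π) / 2 - (v - μ) ^ 2 / (2 * s ^ 2) := by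
  rw [gauss, one_div, log_mul (by positivity) (exp_ne_zero _), log_inv, log_exp,
    log_mul hs.ne' (by positivity), log_sqrt (by positivity)]
  ring

lemma integrable_gauss (hs : 0 < s) (μ : ℝ) : Integrable (gauss μ s) := by
  rw [gauss_eq_gaussianPDFReal hs]
  exact integrable_gaussianPDFReal _ _

lemma toNNReal_sq_ne_zero (hs : 0 < s) : (s ^ 2).toNNReal ≠ 0 :=
  (Real.toNNReal_pos.2 (by positivity)).ne'

lemma integral_gauss (hs : 0 < s) (μ : ℝ) : ∫ v, gauss μ s v = 1 := by
  rw [gauss_eq_gaussianPDFReal hs]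
  exact integral_gaussianPDFReal_eq_one _ (toNNReal_sq_ne_zero hs)

lemma integral_gauss_mul_sq_sub (hs : 0 < s) (μ : ℝ) :
    ∫ v, gauss μ s v * (v - μ) ^ 2 = s ^ 2 := by
  have hvar := variance_fun_id_gaussianReal (μ := μ) (v := (s ^ 2).toNNReal)
  rw [variance_eq_integral measurable_id'.aemeasurable, integral_id_gaussianReal,
    integral_gaussianReal_eq_integral_smul (toNNReal_sq_ne_zero hs),
    Real.coe_toNNReal _ (sq_nonneg s)] at hvar
  simpa only [gauss_eq_gaussianPDFReal hs, smul_eq_mul] using hvar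

lemma integrable_gauss_mul_sq_sub (hs : 0 < s) (μ : ℝ) :
    Integrable fun v => gauss μ s v * (v - μ) ^ 2 :=
  .of_integral_ne_zero (by rw [integral_gauss_mul_sq_sub hs]; positivity)

lemma gauss_mul_log_gauss (hs : 0 < s) (μ : ℝ) :
    (fun v => gauss μ s v * log (gauss μ s v)) = fun v =>
      (-log s - log (2 * π) / 2) * gauss μ s v - (2 * s ^ 2)⁻¹ * (gauss μ s v * (v - μ) ^ 2) := by
  ext v
  rw [log_gauss hs]
  ring

lemma integrable_gauss_mul_log_gauss (hs : 0 < s) (μ : ℝ) :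
    Integrable fun v => gauss μ s v * log (gauss μ s v) := by
  rw [gauss_mul_log_gauss hs]
  exact ((integrable_gauss hs μ).const_mul _).sub ((integrable_gauss_mul_sq_sub hs μ).const_mul _)

lemma diffEntropy_gauss (hs : 0 < s) (μ : ℝ) :
    diffEntropy (gauss μ s) = 1 / 2 * (1 + log (2 * π)) + log s := by
  rw [diffEntropy, gauss_mul_log_gauss hs, integral_sub ((integrable_gauss hs μ).const_mul _)
    ((integrable_gauss_mul_sq_sub hs μ).const_mul _), integral_const_mul, integral_const_mul,
    integral_gauss hs, integral_gauss_mul_sq_sub hs]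
  field_simp
  ring

end Gauss

section CrossEntropy

variable {p q : ℝ → ℝ} {c M : ℝ}

lemma mul_log_add_mul_log_le_mul_log {x y : ℝ} (hc : 0 < c) (hx : 0 ≤ x) (h : c * x ≤ y) :
    x * log c + x * log x ≤ x * log y := by
  rcases hx.eq_or_lt with rfl | hx
  · simp
  rw [← mul_add, ← log_mul hc.ne' hx.ne']
  exact mul_le_mul_of_nonneg_left (log_le_log (by positivity) h) hx.le

lemma integrable_mul_log_of_mul_le_of_le (hq : Integrable q) (hq0 : ∀ v, 0 ≤ q v)
    (hqq : Integrable fun v => q v * log (q v)) (hp : Measurable p) (hc : 0 < c)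
    (hcq : ∀ v, c * q v ≤ p v) (hpM : ∀ v, p v ≤ M) :
    Integrable fun v => q v * log (p v) := by
  refine ((hq.const_mul (|log M| + |log c|)).add hqq.abs).mono'
    (hq.aestronglyMeasurable.mul hp.log.aestronglyMeasurable) (.of_forall fun v => ?_)
  have hlower := mul_log_add_mul_log_le_mul_log hc (hq0 v) (hcq v)
  have hupper : q v * log (p v) ≤ q v * log M := by
    rcases (hq0 v).eq_or_lt with hzero | hpos
    · simp [← hzero]
    exact mul_le_mul_of_nonneg_left
      (log_le_log ((mul_pos hc hpos).trans_le (hcq v)) (hpM v)) hpos.le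
  have hM := mul_le_mul_of_nonneg_left (le_abs_self (log M)) (hq0 v)
  have hc' := mul_le_mul_of_nonneg_left (neg_abs_le (log c)) (hq0 v)
  rw [Real.norm_eq_abs, Pi.add_apply, abs_le]
  constructor <;> linarith [neg_abs_le (q v * log (q v)), abs_nonneg (q v * log (q v)),
    mul_nonneg (hq0 v) (abs_nonneg (log M)), mul_nonneg (hq0 v) (abs_nonneg (log c))]

lemma integral_mul_log_add_log_le (hq : Integrable q) (hq0 : ∀ v, 0 ≤ q v)
    (hqq : Integrable fun v => q v * log (q v)) (hc : 0 < c) (hcq : ∀ v, c * q v ≤ p v)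
    (hqp : Integrable fun v => q v * log (p v)) :
    (∫ v, q v * log (q v)) + log c * ∫ v, q v ≤ ∫ v, q v * log (p v) := by
  rw [← integral_const_mul, ← integral_add hqq (hq.const_mul _)]
  refine integral_mono (hqq.add (hq.const_mul _)) hqp fun v => ?_
  linarith [mul_log_add_mul_log_le_mul_log hc (hq0 v) (hcq v)]

end CrossEntropy

section GaussCrossEntropy

variable {p : ℝ → ℝ} {μ s c M : ℝ}

lemma integrable_gauss_mul_log (hs : 0 < s) (hp : Measurable p) (hc : 0 < c)
    (hcp : ∀ v, c * gauss μ s v ≤ p v) (hpM : ∀ v, p v ≤ M) :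
    Integrable fun v => gauss μ s v * log (p v) :=
  integrable_mul_log_of_mul_le_of_le (integrable_gauss hs μ) (fun v => (gauss_pos hs μ v).le)
    (integrable_gauss_mul_log_gauss hs μ) hp hc hcp hpM

lemma log_sub_diffEntropy_gauss_le (hs : 0 < s) (hp : Measurable p) (hc : 0 < c)
    (hcp : ∀ v, c * gauss μ s v ≤ p v) (hpM : ∀ v, p v ≤ M) :
    log c - diffEntropy (gauss μ s) ≤ ∫ v, gauss μ s v * log (p v) := by
  have h := integral_mul_log_add_log_le (integrable_gauss hs μ) (fun v => (gauss_pos hs μ v).le)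
    (integrable_gauss_mul_log_gauss hs μ) hc hcp (integrable_gauss_mul_log hs hp hc hcp hpM)
  rw [integral_gauss hs, mul_one] at h
  rw [diffEntropy]
  linarith

end GaussCrossEntropy

theorem diffEntropy_gauss_mixture_le {μ₁ μ₂ s₁ s₂ w : ℝ} (hs₁ : 0 < s₁) (hs₂ : 0 < s₂)
    (hw₀ : 0 < w) (hw₁ : w < 1) :
    diffEntropy (fun v => w * gauss μ₁ s₁ v + (1 - w) * gauss μ₂ s₂ v) ≤
      w * diffEntropy (gauss μ₁ s₁) + (1 - w) * diffEntropy (gauss μ₂ s₂) + binEntropy w := by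
  set p := fun v => w * gauss μ₁ s₁ v + (1 - w) * gauss μ₂ s₂ v
  have hw₁' : 0 < 1 - w := sub_pos.2 hw₁
  have hmeas : Measurable p :=
    ((measurable_gauss _ _).const_mul _).add ((measurable_gauss _ _).const_mul _)
  have hpM (v : ℝ) : p v ≤ w * (s₁ * √(2 * π))⁻¹ + (1 - w) * (s₂ * √(2 * π))⁻¹ := by
    show w * gauss μ₁ s₁ v + (1 - w) * gauss μ₂ s₂ v ≤ _
    gcongr
    exacts [gauss_le hs₁ _ _, gauss_le hs₂ _ _]
  have hp₁ (v : ℝ) : w * gauss μ₁ s₁ v ≤ p v :=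
    le_add_of_nonneg_right (mul_nonneg hw₁'.le (gauss_pos hs₂ _ _).le)
  have hp₂ (v : ℝ) : (1 - w) * gauss μ₂ s₂ v ≤ p v :=
    le_add_of_nonneg_left (mul_nonneg hw₀.le (gauss_pos hs₁ _ _).le)
  have hsplit : ∫ v, p v * log (p v) =
      w * (∫ v, gauss μ₁ s₁ v * log (p v)) + (1 - w) * ∫ v, gauss μ₂ s₂ v * log (p v) := by
    rw [← integral_const_mul, ← integral_const_mul,
      ← integral_add ((integrable_gauss_mul_log hs₁ hmeas hw₀ hp₁ hpM).const_mul _)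
        ((integrable_gauss_mul_log hs₂ hmeas hw₁' hp₂ hpM).const_mul _)]
    congr 1 with v
    ring
  have hle₁ := log_sub_diffEntropy_gauss_le hs₁ hmeas hw₀ hp₁ hpM
  have hle₂ := log_sub_diffEntropy_gauss_le hs₂ hmeas hw₁' hp₂ hpM
  rw [diffEntropy, hsplit, binEntropy, log_inv, log_inv]
  linarith [mul_le_mul_of_nonneg_left hle₁ hw₀.le, mul_le_mul_of_nonneg_left hle₂ hw₁'.le]

theorem diffEntropy_standardized_mixture_upper_general (σ δ : ℝ) (hσ : 0 < σ)
    (r δhat σhat : ℝ) (hr : r = δ / σ)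
    (hσhat : σhat = σ / Real.sqrt (σ ^ 2 + δ ^ 2)) :
    diffEntropy (fun v => (gauss (-δhat) σhat v + gauss δhat σhat v) / 2) ≤
      (1 / 2) * (1 + Real.log (2 * π)) - (1 / 2) * Real.log (1 + r ^ 2) + Real.log 2 := by
  have hnorm : 0 < σ ^ 2 + δ ^ 2 := by positivity
  have hσhat_pos : 0 < σhat := by rw [hσhat]; positivity
  have hlog : log σhat = -(1 / 2) * log (1 + r ^ 2) := by
    rw [hσhat, hr, log_div hσ.ne' (sqrt_pos.2 hnorm).ne', log_sqrt hnorm.le, div_pow,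
      one_add_div (by positivity), log_div hnorm.ne' (by positivity), log_pow]
    push_cast
    ring
  have hmix : (fun v => (gauss (-δhat) σhat v + gauss δhat σhat v) / 2) =
      fun v => 2⁻¹ * gauss (-δhat) σhat v + (1 - 2⁻¹) * gauss δhat σhat v := by
    ext v
    ring
  rw [hmix]
  refine (diffEntropy_gauss_mixture_le hσhat_pos hσhat_pos (by norm_num) (by norm_num)).trans_eq ?_
  rw [diffEntropy_gauss hσhat_pos, diffEntropy_gauss hσhat_pos, binEntropy_two_inv, hlog]
  ring

/-- upper bound on the differential entropy of the standardized
two-component Gaussian mixture `p_z(v) = (N(v;−δ̂,σ̂) + N(v;δ̂,σ̂))/2`: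
`H(p_z) ≤ (1/2)(1 + ln(2π)) − (1/2) ln(1 + r²) + ln 2` where `r = δ/σ`. -/
theorem diffEntropy_standardized_mixture_upper (σ δ : ℝ) (hσ : 0 < σ) (hδ : 0 < δ)
    (r δhat σhat : ℝ) (hr : r = δ / σ)
    (hδhat : δhat = δ / Real.sqrt (σ ^ 2 + δ ^ 2))
    (hσhat : σhat = σ / Real.sqrt (σ ^ 2 + δ ^ 2)) :
    diffEntropy (fun v => (gauss (-δhat) σhat v + gauss δhat σhat v) / 2) ≤
      (1 / 2) * (1 + Real.log (2 * π)) - (1 / 2) * Real.log (1 + r ^ 2) + Real.log 2 :=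
  diffEntropy_standardized_mixture_upper_general σ δ hσ r δhat σhat hr hσhat
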